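/- arXiv:2003.04572 — 8 statements merged into one kernel-verified Lean document; each statement's English description precedes it below -/
import Mathlib

section
/- Let X₁ and X₂ be Banach spaces and let P ∈ B(X₁), Q ∈ B(X₂) be bounded idempotent operators. Then the range of P is isomorphic (linearly homeomorphic) to the range of Q if and only if there exist bounded operators U : X₂ → X₁ and V : X₁ → X₂ with P = U ∘ V and Q = V ∘ U. -/
private lemma idem_fix {X : Type*} [NormedAddCommGroup X] [NormedSpace ℂ X]
    (P : X →L[ℂ] X) (hP : IsIdempotentElem P) {x : X} (hx : x ∈ LinearMap.range (P : X →ₗ[ℂ] X)) :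
    P x = x := by
  obtain ⟨y, rfl⟩ := hx
  calc P (P y) = (P * P) y := rfl
    _ = P y := by rw [hP]

/-- For idempotent bounded operators `P ∈ B(X₁)` and `Q ∈ B(X₂)`, the ranges of `P` and `Q`
are isomorphic (linearly homeomorphic) Banach spaces if and only if there exist bounded
operators `U : X₂ → X₁` and `V : X₁ → X₂` with `P = U ∘ V` and `Q = V ∘ U`. -/
theorem range_isomorphic_iff_equivalent
    {X₁ X₂ : Type*}
    [NormedAddCommGroup X₁] [NormedSpace ℂ X₁] [CompleteSpace X₁]
    [NormedAddCommGroup X₂] [NormedSpace ℂ X₂] [CompleteSpace X₂]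
    (P : X₁ →L[ℂ] X₁) (Q : X₂ →L[ℂ] X₂)
    (hP : IsIdempotentElem P) (hQ : IsIdempotentElem Q) :
    Nonempty ((LinearMap.range (P : X₁ →ₗ[ℂ] X₁)) ≃L[ℂ] (LinearMap.range (Q : X₂ →ₗ[ℂ] X₂))) ↔
      ∃ (U : X₂ →L[ℂ] X₁) (V : X₁ →L[ℂ] X₂), P = U ∘L V ∧ Q = V ∘L U := by
  constructor
  · rintro ⟨T⟩
    set Pc : X₁ →L[ℂ] (LinearMap.range (P : X₁ →ₗ[ℂ] X₁)) :=
      P.codRestrict (LinearMap.range (P : X₁ →ₗ[ℂ] X₁)) (fun x => LinearMap.mem_range_self (P : X₁ →ₗ[ℂ] X₁) x) with hPc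
    set Qc : X₂ →L[ℂ] (LinearMap.range (Q : X₂ →ₗ[ℂ] X₂)) :=
      Q.codRestrict (LinearMap.range (Q : X₂ →ₗ[ℂ] X₂)) (fun x => LinearMap.mem_range_self (Q : X₂ →ₗ[ℂ] X₂) x) with hQc
    refine ⟨(LinearMap.range (P : X₁ →ₗ[ℂ] X₁)).subtypeL ∘L (T.symm : _ →L[ℂ] _) ∘L Qc,
            (LinearMap.range (Q : X₂ →ₗ[ℂ] X₂)).subtypeL ∘L (T : _ →L[ℂ] _) ∘L Pc, ?_, ?_⟩
    · ext x
      have h1 : Qc ((T (Pc x) : LinearMap.range (Q : X₂ →ₗ[ℂ] X₂)) : X₂) = T (Pc x) := by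
        apply Subtype.ext
        exact idem_fix Q hQ (T (Pc x)).2
      simp only [ContinuousLinearMap.comp_apply, Submodule.subtypeL_apply,
        ContinuousLinearEquiv.coe_coe, h1, ContinuousLinearEquiv.symm_apply_apply]
      rfl
    · ext y
      have h1 : Pc ((T.symm (Qc y) : LinearMap.range (P : X₁ →ₗ[ℂ] X₁)) : X₁) = T.symm (Qc y) := by
        apply Subtype.ext
        exact idem_fix P hP (T.symm (Qc y)).2
      simp only [ContinuousLinearMap.comp_apply, Submodule.subtypeL_apply,
        ContinuousLinearEquiv.coe_coe, h1, ContinuousLinearEquiv.apply_symm_apply]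
      rfl
  · rintro ⟨U, V, hPUV, hQVU⟩
    have hPapp : ∀ z, P z = U (V z) := fun z => by rw [hPUV]; rfl
    have hQapp : ∀ z, Q z = V (U z) := fun z => by rw [hQVU]; rfl
    have hmemV : ∀ x : (LinearMap.range (P : X₁ →ₗ[ℂ] X₁)), V (x : X₁) ∈ LinearMap.range (Q : X₂ →ₗ[ℂ] X₂) := by
      intro x
      refine ⟨V (x : X₁), ?_⟩
      rw [ContinuousLinearMap.coe_coe, hQapp, ← hPapp, idem_fix P hP x.2]
    have hmemU : ∀ y : (LinearMap.range (Q : X₂ →ₗ[ℂ] X₂)), U (y : X₂) ∈ LinearMap.range (P : X₁ →ₗ[ℂ] X₁) := by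
      intro y
      refine ⟨U (y : X₂), ?_⟩
      rw [ContinuousLinearMap.coe_coe, hPapp, ← hQapp, idem_fix Q hQ y.2]
    set f : (LinearMap.range (P : X₁ →ₗ[ℂ] X₁)) →L[ℂ] (LinearMap.range (Q : X₂ →ₗ[ℂ] X₂)) :=
      (V ∘L (LinearMap.range (P : X₁ →ₗ[ℂ] X₁)).subtypeL).codRestrict (LinearMap.range (Q : X₂ →ₗ[ℂ] X₂)) hmemV with hf
    set g : (LinearMap.range (Q : X₂ →ₗ[ℂ] X₂)) →L[ℂ] (LinearMap.range (P : X₁ →ₗ[ℂ] X₁)) :=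
      (U ∘L (LinearMap.range (Q : X₂ →ₗ[ℂ] X₂)).subtypeL).codRestrict (LinearMap.range (P : X₁ →ₗ[ℂ] X₁)) hmemU with hg
    refine ⟨ContinuousLinearEquiv.equivOfInverse f g ?_ ?_⟩
    · intro x
      apply Subtype.ext
      show U (V (x : X₁)) = (x : X₁)
      rw [← hPapp, idem_fix P hP x.2]
    · intro y
      apply Subtype.ext
      show V (U (y : X₂)) = (y : X₂)
      rw [← hQapp, idem_fix Q hQ y.2]
end

section
/- Let X be a Banach space and let (Qᵢ)_{i ∈ I} be a family of mutually orthogonal, non-zero, bounded idempotent operators on X with sup_i ‖Qᵢ‖ < ∞. Then the density character of X is at least the cardinality of I. -/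
/-!
Each `Q i` is a non-zero idempotent, so it fixes some unit vector `y i`. For `i ≠ j`,
orthogonality gives `Q i (y i - y j) = y i`, hence `1 ≤ ‖Q i‖ * ‖y i - y j‖ ≤ C * ‖y i - y j‖`:
the `y i` are `C⁻¹`-separated. Points of a dense set within `C⁻¹ / 2` of the `y i` are then
pairwise distinct.
-/

universe u v

open Cardinal

theorem Dense.lift_mk_le_of_pairwise_le_dist {α : Type u} [PseudoMetricSpace α] {s : Set α}
    (hs : Dense s) {ι : Type v} (y : ι → α) {ε : ℝ} (hε : 0 < ε)
    (hy : Pairwise fun i j => ε ≤ dist (y i) (y j)) :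
    lift.{u} #ι ≤ lift.{v} #s := by
  choose f hfs hfy using fun i => hs.exists_dist_lt (y i) (half_pos hε)
  refine lift_mk_le'.2 ⟨⟨fun i => ⟨f i, hfs i⟩, fun i j hij => ?_⟩⟩
  by_contra hne
  have hfij : f i = f j := congrArg Subtype.val hij
  have hi : dist (y i) (f j) < ε / 2 := hfij ▸ hfy i
  linarith [hy hne, hfy j, dist_triangle_right (y i) (y j) (f j)]

theorem IsIdempotentElem.exists_norm_eq_one_apply_eq_self {𝕜 E : Type*} [RCLike 𝕜]
    [NormedAddCommGroup E] [NormedSpace 𝕜 E] {P : E →L[𝕜] E} (hP : IsIdempotentElem P)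
    (hP0 : P ≠ 0) : ∃ y, ‖y‖ = 1 ∧ P y = y := by
  obtain ⟨x, hx⟩ : ∃ x, P x ≠ 0 := by
    by_contra! h
    exact hP0 (ContinuousLinearMap.ext h)
  refine ⟨(‖P x‖⁻¹ : 𝕜) • P x, norm_smul_inv_norm hx, ?_⟩
  rw [map_smul, ← mul_apply_eq_comp, hP.eq]

theorem exists_pairwise_inv_le_dist_of_orthogonal_idempotents {𝕜 E ι : Type*} [RCLike 𝕜]
    [NormedAddCommGroup E] [NormedSpace 𝕜 E] (Q : ι → E →L[𝕜] E)
    (hidem : ∀ i, IsIdempotentElem (Q i)) (hne : ∀ i, Q i ≠ 0)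
    (horth : ∀ i j, i ≠ j → Q i ∘L Q j = 0) {C : ℝ} (hC : ∀ i, ‖Q i‖ ≤ C) :
    ∃ y : ι → E, Pairwise fun i j => C⁻¹ ≤ dist (y i) (y j) := by
  choose y hy1 hQy using fun i => (hidem i).exists_norm_eq_one_apply_eq_self (hne i)
  refine ⟨y, fun i j hij => ?_⟩
  have hC0 : 0 < C := (norm_pos_iff.2 (hne i)).trans_le (hC i)
  have hQij : Q i (y i - y j) = y i := by
    rw [map_sub, hQy i, ← hQy j, ← ContinuousLinearMap.comp_apply, horth i j hij,
      zero_apply, sub_zero]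
  change C⁻¹ ≤ dist (y i) (y j)
  rw [inv_le_iff_one_le_mul₀' hC0, dist_eq_norm]
  calc 1 = ‖Q i (y i - y j)‖ := by rw [hQij, hy1]
    _ ≤ ‖Q i‖ * ‖y i - y j‖ := (Q i).le_opNorm _
    _ ≤ C * ‖y i - y j‖ := by gcongr; exact hC i

theorem density_ge_card_of_orthogonal_idempotents_general
    {X : Type u} [NormedAddCommGroup X] [NormedSpace ℂ X]
    {I : Type v} (Q : I → X →L[ℂ] X)
    (hidem : ∀ i, IsIdempotentElem (Q i))
    (hne : ∀ i, Q i ≠ 0)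
    (horth : ∀ i j, i ≠ j → Q i ∘L Q j = 0)
    (hbdd : ∃ C : ℝ, ∀ i, ‖Q i‖ ≤ C) :
    ∀ s : Set X, Dense s →
      Cardinal.lift.{u} (Cardinal.mk I) ≤ Cardinal.lift.{v} (Cardinal.mk s) := by
  intro s hs
  obtain ⟨C, hC⟩ := hbdd
  obtain ⟨y, hy⟩ := exists_pairwise_inv_le_dist_of_orthogonal_idempotents Q hidem hne horth
    (C := max C 1) fun i => (hC i).trans (le_max_left C 1)
  exact hs.lift_mk_le_of_pairwise_le_dist y (inv_pos.2 (lt_max_of_lt_right one_pos)) hy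

/-- If a Banach space `X` admits a uniformly bounded family of mutually orthogonal
non-zero idempotent operators indexed by `I`, then every dense subset of `X` has
cardinality at least `|I|` (i.e. the density character of `X` is at least `|I|`). -/
theorem density_ge_card_of_orthogonal_idempotents
    {X : Type u} [NormedAddCommGroup X] [NormedSpace ℂ X] [CompleteSpace X]
    {I : Type v} (Q : I → X →L[ℂ] X)
    (hidem : ∀ i, IsIdempotentElem (Q i))
    (hne : ∀ i, Q i ≠ 0)
    (horth : ∀ i j, i ≠ j → Q i ∘L Q j = 0)
    (hbdd : ∃ C : ℝ, ∀ i, ‖Q i‖ ≤ C) :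
    ∀ s : Set X, Dense s →
      Cardinal.lift.{u} (Cardinal.mk I) ≤ Cardinal.lift.{v} (Cardinal.mk s) :=
  density_ge_card_of_orthogonal_idempotents_general Q hidem hne horth hbdd
end

section
/- Let X be a reflexive Banach space and let (Qₙ)_{n ∈ ℕ} be a sequence of idempotents in B(X) with sup_n ‖Qₙ‖ < ∞ and Qₙ ≤ Q_{n+1} for all n (i.e., QₙQ_{n+1} = Qₙ = Q_{n+1}Qₙ). Then there exists an idempotent Q ∈ B(X) such that Qₙ x → Q x in norm for every x ∈ X. -/
/-!
By reflexivity (Banach–Alaoglu in the bidual), the bounded sequence `Qₙ x` has a weak limit `y`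
along an ultrafilter. Since `Q_m Q_n = Q_m` for `m ≤ n`, weak continuity of `Q_m` gives
`Q_m y = Q_m x`, and `y` lies in the weak closure of the convex set `⋃ₘ ran Q_m`, which is its
norm closure. The family `Qₙ` is equicontinuous and eventually the identity on each `ran Q_m`,
so `Qₙ z → z` on that closure; hence `Qₙ x = Qₙ y → y`. The pointwise limit is bounded by the
uniform bound on `‖Qₙ‖`, and it is idempotent because `Qₙ y = Qₙ x`.
-/

open Filter Topology NormedSpace

theorem mul_eq_and_mul_eq_of_le {M : Type*} [Semigroup M] {P : ℕ → M}
    (hidem : ∀ n, IsIdempotentElem (P n))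
    (hmono : ∀ n, P n * P (n + 1) = P n ∧ P (n + 1) * P n = P n) {m n : ℕ} (hmn : m ≤ n) :
    P m * P n = P m ∧ P n * P m = P m := by
  induction n, hmn using Nat.le_induction with
  | base => exact ⟨hidem m, hidem m⟩
  | succ n _ ih =>
    exact ⟨by rw [← ih.1, mul_assoc, (hmono n).1], by rw [← ih.2, ← mul_assoc, (hmono n).2]⟩

theorem tendsto_apply_self_of_mem_closure_iUnion_range {𝕜 X : Type*}
    [NontriviallyNormedField 𝕜] [SeminormedAddCommGroup X] [NormedSpace 𝕜 X]
    {Q : ℕ → X →L[𝕜] X} (hbdd : ∃ C, ∀ n, ‖Q n‖ ≤ C) (hfix : ∀ m n, m ≤ n → Q n * Q m = Q m)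
    {y : X} (hy : y ∈ closure (⋃ m, Set.range (Q m))) :
    Tendsto (fun n => Q n y) atTop (𝓝 y) := by
  have hequi : Equicontinuous fun n => (Q n : X → X) :=
    ((NormedSpace.equicontinuous_TFAE Q).out 5 1).mp hbdd
  refine closure_minimal (Set.iUnion_subset fun m => ?_)
    (hequi.isClosed_setOfPred_tendsto continuous_id) hy
  rintro - ⟨w, rfl⟩
  refine tendsto_const_nhds.congr' ?_
  filter_upwards [eventually_ge_atTop m] with n hn
  exact (congrArg (· w) (hfix m n hn)).symm

section Reflexive

variable {𝕜 X : Type*} [RCLike 𝕜] [NormedAddCommGroup X] [NormedSpace 𝕜 X]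

theorem exists_tendsto_toWeakSpace_of_surjective_inclusionInDoubleDual {ι : Type*}
    (hrefl : Function.Surjective (inclusionInDoubleDual 𝕜 X)) (U : Ultrafilter ι)
    {v : ι → X} {C : ℝ} (hv : ∀ i, ‖v i‖ ≤ C) :
    ∃ y : X, Tendsto (fun i => toWeakSpace 𝕜 X (v i)) U (𝓝 (toWeakSpace 𝕜 X y)) := by
  obtain ⟨F, -, hF⟩ :=
    (WeakDual.isCompact_closedBall (0 : StrongDual 𝕜 (StrongDual 𝕜 X)) C).ultrafilter_le_nhds
      (U.map fun i => StrongDual.toWeakDual (inclusionInDoubleDual 𝕜 X (v i)))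
      (by
        rw [Ultrafilter.coe_map, le_principal_iff, mem_map]
        exact univ_mem' fun i => by simpa using (double_dual_bound 𝕜 X (v i)).trans (hv i))
  rw [Ultrafilter.coe_map] at hF
  obtain ⟨y, hy⟩ := hrefl (WeakDual.toStrongDual F)
  refine ⟨y, (WeakBilin.tendsto_iff_forall_eval_tendsto (B := (topDualPairing 𝕜 X).flip) ?_).2
    fun φ => ?_⟩
  · exact fun a b hab => SeparatingDual.eq_iff_forall_dual_eq.2 (LinearMap.congr_fun hab)
  · have hFφ : F φ = φ y := by rw [← WeakDual.toStrongDual_apply, ← hy]; rfl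
    exact hFφ ▸ ((WeakDual.eval_continuous φ).tendsto F).comp hF

variable [NormedSpace ℝ X] [IsScalarTower ℝ 𝕜 X]

theorem mem_closure_of_tendsto_toWeakSpace {ι : Type*} {l : Filter ι} [l.NeBot] {s : Set X}
    (hs : Convex ℝ s) {v : ι → X} {y : X}
    (hv : Tendsto (fun i => toWeakSpace 𝕜 X (v i)) l (𝓝 (toWeakSpace 𝕜 X y)))
    (hmem : ∀ᶠ i in l, v i ∈ s) : y ∈ closure s := by
  have hy := mem_closure_of_tendsto hv (hmem.mono fun i hi => Set.mem_image_of_mem _ hi)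
  rw [← hs.toWeakSpace_closure 𝕜] at hy
  obtain ⟨z, hz, hzy⟩ := hy
  exact (toWeakSpace 𝕜 X).injective hzy ▸ hz

theorem convex_iUnion_range_of_mul_eq {Q : ℕ → X →L[𝕜] X}
    (hfix : ∀ m n, m ≤ n → Q n * Q m = Q m) : Convex ℝ (⋃ m, Set.range (Q m)) := by
  refine Directed.convex_iUnion (directed_of_isDirected_le fun m n hmn => ?_) fun m => ?_
  · rintro - ⟨w, rfl⟩
    exact ⟨Q m w, congrArg (· w) (hfix m n hmn)⟩
  · exact (LinearMap.range ((Q m).restrictScalars ℝ : X →ₗ[ℝ] X)).convex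

theorem exists_tendsto_apply_of_surjective_inclusionInDoubleDual
    (hrefl : Function.Surjective (inclusionInDoubleDual 𝕜 X)) {Q : ℕ → X →L[𝕜] X}
    (hbdd : ∃ C, ∀ n, ‖Q n‖ ≤ C) (hchain : ∀ m n, m ≤ n → Q m * Q n = Q m ∧ Q n * Q m = Q m)
    (x : X) : ∃ y, (∀ m, Q m y = Q m x) ∧ Tendsto (fun n => Q n x) atTop (𝓝 y) := by
  obtain ⟨C, hC⟩ := hbdd
  set U := Ultrafilter.of (atTop : Filter ℕ)
  obtain ⟨y, hy⟩ := exists_tendsto_toWeakSpace_of_surjective_inclusionInDoubleDual hrefl U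
    fun n => (Q n).le_of_opNorm_le (hC n) x
  have hQy : ∀ m, Q m y = Q m x := fun m => by
    have hlim : Tendsto (fun n => toWeakSpace 𝕜 X (Q m (Q n x))) U
        (𝓝 (toWeakSpace 𝕜 X (Q m y))) :=
      ((WeakSpace.map (Q m)).continuous.tendsto _).comp hy
    refine (toWeakSpace 𝕜 X).injective (tendsto_nhds_unique hlim (tendsto_const_nhds.congr' ?_))
    filter_upwards [(eventually_ge_atTop m).filter_mono (Ultrafilter.of_le _)] with n hn
    exact (congrArg (· x) (hchain m n hn).1).symm
  have hyM : y ∈ closure (⋃ m, Set.range (Q m)) :=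
    mem_closure_of_tendsto_toWeakSpace
      (convex_iUnion_range_of_mul_eq fun m n h => (hchain m n h).2) hy
      (Eventually.of_forall fun n => Set.mem_iUnion_of_mem n (Set.mem_range_self x))
  refine ⟨y, hQy, ?_⟩
  simpa only [hQy] using tendsto_apply_self_of_mem_closure_iUnion_range ⟨C, hC⟩
    (fun m n h => (hchain m n h).2) hyM

end Reflexive

theorem increasing_idempotents_sot_limit_general
    {X : Type*} [NormedAddCommGroup X] [NormedSpace ℂ X]
    (hrefl : Function.Bijective (NormedSpace.inclusionInDoubleDual ℂ X))
    (Q : ℕ → X →L[ℂ] X)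
    (hidem : ∀ n, IsIdempotentElem (Q n))
    (hbdd : ∃ C : ℝ, ∀ n, ‖Q n‖ ≤ C)
    (hmono : ∀ n, Q n * Q (n + 1) = Q n ∧ Q (n + 1) * Q n = Q n) :
    ∃ Qlim : X →L[ℂ] X, IsIdempotentElem Qlim ∧
      ∀ x : X, Tendsto (fun n => Q n x) atTop (nhds (Qlim x)) := by
  choose P hQP hlim using exists_tendsto_apply_of_surjective_inclusionInDoubleDual hrefl.2 hbdd
    fun m n => mul_eq_and_mul_eq_of_le hidem hmono
  obtain ⟨C, hC⟩ := hbdd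
  let Qlim := ContinuousLinearMap.ofTendstoOfBoundedRange P Q (tendsto_pi_nhds.2 hlim)
    (isBounded_iff_forall_norm_le.2 ⟨C, Set.forall_mem_range.2 hC⟩)
  refine ⟨Qlim, ContinuousLinearMap.ext fun x => ?_, hlim⟩
  exact tendsto_nhds_unique (hlim (P x)) ((hlim x).congr fun n => (hQP x n).symm)

/-- In a reflexive Banach space, a uniformly bounded monotone increasing sequence of
idempotent operators converges in the strong operator topology to an idempotent. -/
theorem increasing_idempotents_sot_limit
    {X : Type*} [NormedAddCommGroup X] [NormedSpace ℂ X] [CompleteSpace X]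
    (hrefl : Function.Bijective (NormedSpace.inclusionInDoubleDual ℂ X))
    (Q : ℕ → X →L[ℂ] X)
    (hidem : ∀ n, IsIdempotentElem (Q n))
    (hbdd : ∃ C : ℝ, ∀ n, ‖Q n‖ ≤ C)
    (hmono : ∀ n, Q n * Q (n + 1) = Q n ∧ Q (n + 1) * Q n = Q n) :
    ∃ Qlim : X →L[ℂ] X, IsIdempotentElem Qlim ∧
      ∀ x : X, Tendsto (fun n => Q n x) atTop (nhds (Qlim x)) :=
  increasing_idempotents_sot_limit_general hrefl Q hidem hbdd hmono
end

section
/- Let X be a Banach space with a subsymmetric Schauder basis. Then B(X) admits a bounded family Q of commuting, pairwise almost orthogonal idempotents such that |Q| = 2^ℵ₀ and the range of each P ∈ Q is isomorphic to X. -/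
/-!
The coordinate projections `P_A x = ∑_{n ∈ A} f n x • b n` of an unconditional basis are
uniformly bounded in `A` (Banach–Steinhaus) and multiply by `P_A P_B = P_{A ∩ B}`. Indexing them
by an almost disjoint family of continuum many infinite subsets of `ℕ` therefore gives commuting
idempotents whose products have finite rank. If `σ` enumerates an infinite `A`, subsymmetry makes
`(b (σ n))` equivalent to `(b n)`, so `b n ↦ b (σ n)` extends to an isomorphism of `X` onto the
range of `P_A`.
-/

open Set Function

section StrongTsum

variable {ι 𝕜 E F : Type*} [NontriviallyNormedField 𝕜]
  [NormedAddCommGroup E] [NormedSpace 𝕜 E] [NormedAddCommGroup F] [NormedSpace 𝕜 F]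

theorem Summable.exists_norm_sum_le {g : ι → F} (hg : Summable g) :
    ∃ M, ∀ s : Finset ι, ‖∑ i ∈ s, g i‖ ≤ M := by
  classical
  obtain ⟨s₀, hs₀⟩ := hg.vanishing (Metric.ball_mem_nhds 0 one_pos)
  refine ⟨1 + ∑ i ∈ s₀, ‖g i‖, fun s => ?_⟩
  calc ‖∑ i ∈ s, g i‖ = ‖∑ i ∈ s \ s₀, g i + ∑ i ∈ s ∩ s₀, g i‖ := by
        rw [add_comm, Finset.sum_inter_add_sum_sdiff]
    _ ≤ ‖∑ i ∈ s \ s₀, g i‖ + ∑ i ∈ s ∩ s₀, ‖g i‖ :=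
        norm_add_le_of_le le_rfl (norm_sum_le _ _)
    _ ≤ 1 + ∑ i ∈ s₀, ‖g i‖ := by
        gcongr
        · exact (mem_ball_zero_iff.1 (hs₀ _ Finset.sdiff_disjoint)).le
        · exact Finset.inter_subset_right

theorem Summable.of_norm_sum_le_mul [CompleteSpace F] {g h : ι → F} {K : ℝ}
    (hg : Summable g) (hK : ∀ t : Finset ι, ‖∑ i ∈ t, h i‖ ≤ K * ‖∑ i ∈ t, g i‖) :
    Summable h := by
  rw [summable_iff_vanishing_norm] at hg ⊢
  intro ε hε
  obtain ⟨s, hs⟩ := hg (ε / (|K| + 1)) (by positivity)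
  refine ⟨s, fun t ht => ?_⟩
  calc ‖∑ i ∈ t, h i‖ ≤ K * ‖∑ i ∈ t, g i‖ := hK t
    _ ≤ (|K| + 1) * ‖∑ i ∈ t, g i‖ := by gcongr; linarith [le_abs_self K]
    _ < (|K| + 1) * (ε / (|K| + 1)) := by gcongr; exact hs t ht
    _ = ε := by field_simp

variable [CompleteSpace E]

theorem exists_norm_sum_apply_le (g : ι → E →L[𝕜] F) (hg : ∀ x, Summable fun i => g i x) :
    ∃ C, 0 ≤ C ∧ ∀ (s : Finset ι) (x : E), ‖∑ i ∈ s, g i x‖ ≤ C * ‖x‖ := by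
  obtain ⟨C, hC⟩ := banach_steinhaus (g := fun s : Finset ι => ∑ i ∈ s, g i) fun x => by
    simpa only [_root_.sum_apply] using (hg x).exists_norm_sum_le
  refine ⟨max C 0, le_max_right _ _, fun s x => ?_⟩
  calc ‖∑ i ∈ s, g i x‖ = ‖(∑ i ∈ s, g i) x‖ := by rw [_root_.sum_apply]
    _ ≤ ‖∑ i ∈ s, g i‖ * ‖x‖ := ContinuousLinearMap.le_opNorm _ _
    _ ≤ max C 0 * ‖x‖ := by gcongr; exact (hC s).trans (le_max_left _ _)

namespace ContinuousLinearMap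

noncomputable def strongTsum (g : ι → E →L[𝕜] F) (hg : ∀ x, Summable fun i => g i x) :
    E →L[𝕜] F :=
  LinearMap.mkContinuousOfExistsBound
    { toFun := fun x => ∑' i, g i x
      map_add' := fun x y => by simp only [map_add]; exact (hg x).tsum_add (hg y)
      map_smul' := fun c x => by simp only [map_smul]; exact tsum_const_smul'' c }
    (by
      obtain ⟨C, -, hC⟩ := exists_norm_sum_apply_le g hg
      exact ⟨C, fun x => le_of_tendsto (hg x).hasSum.norm (.of_forall fun s => hC s x)⟩)

theorem norm_strongTsum_le {g : ι → E →L[𝕜] F} (hg : ∀ x, Summable fun i => g i x)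
    {C : ℝ} (hC₀ : 0 ≤ C)
    (hC : ∀ (s : Finset ι) (x : E), ‖∑ i ∈ s, g i x‖ ≤ C * ‖x‖) : ‖strongTsum g hg‖ ≤ C :=
  opNorm_le_bound _ hC₀ fun x => le_of_tendsto (hg x).hasSum.norm (.of_forall fun s => hC s x)

end ContinuousLinearMap

end StrongTsum

section Basis

variable {ι κ 𝕜 X : Type*} [DecidableEq ι] [NontriviallyNormedField 𝕜]
  [NormedAddCommGroup X] [NormedSpace 𝕜 X]

structure IsUnconditionalBasis (b : ι → X) (f : ι → StrongDual 𝕜 X) : Prop where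
  coeff_basis : ∀ m n, f m (b n) = if m = n then 1 else 0
  hasSum : ∀ x, HasSum (fun n => f n x • b n) x

namespace IsUnconditionalBasis

variable {b : ι → X} {f : ι → StrongDual 𝕜 X}

theorem ext_coeff (hb : IsUnconditionalBasis b f) {x y : X} (h : ∀ i, f i x = f i y) : x = y :=
  (hb.hasSum x).unique (by simpa only [h] using hb.hasSum y)

theorem coeff_tsum_comp (hb : IsUnconditionalBasis b f) {σ : κ → ι} (hσ : Injective σ)
    {c : κ → 𝕜} (hc : Summable fun k => c k • b (σ k)) (k : κ) :
    f (σ k) (∑' j, c j • b (σ j)) = c k := by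
  rw [(f (σ k)).map_tsum hc, tsum_eq_single k fun j hj => ?_]
  · simp [hb.coeff_basis]
  · simp [hb.coeff_basis, hσ.ne hj.symm]

theorem coeff_tsum_comp_of_notMem (hb : IsUnconditionalBasis b f) {σ : κ → ι} {c : κ → 𝕜}
    (hc : Summable fun k => c k • b (σ k)) {m : ι} (hm : m ∉ range σ) :
    f m (∑' j, c j • b (σ j)) = 0 := by
  have hne : ∀ j, m ≠ σ j := fun j h => hm ⟨j, h.symm⟩
  simp [(f m).map_tsum hc, hb.coeff_basis, hne]

variable [CompleteSpace X]

noncomputable def proj (hb : IsUnconditionalBasis b f) (A : Set ι) : X →L[𝕜] X :=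
  .strongTsum (fun i : A => (f i).smulRight (b i)) fun x =>
    (hb.hasSum x).summable.subtype (· ∈ A)

theorem proj_apply (hb : IsUnconditionalBasis b f) (A : Set ι) (x : X) :
    hb.proj A x = ∑' i : A, f i x • b i := rfl

theorem coeff_proj (hb : IsUnconditionalBasis b f) (A : Set ι) (x : X) (m : ι) :
    f m (hb.proj A x) = A.indicator (fun i => f i x) m := by
  have hc := (hb.hasSum x).summable.subtype (· ∈ A)
  by_cases hm : m ∈ A
  · rw [indicator_of_mem hm]
    exact hb.coeff_tsum_comp Subtype.val_injective hc ⟨m, hm⟩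
  · rw [indicator_of_notMem hm]
    exact hb.coeff_tsum_comp_of_notMem hc (by simpa using hm)

theorem proj_mul_proj (hb : IsUnconditionalBasis b f) (A B : Set ι) :
    hb.proj A * hb.proj B = hb.proj (A ∩ B) :=
  ContinuousLinearMap.ext fun x => hb.ext_coeff fun m => by
    simp only [ContinuousLinearMap.mul_def, ContinuousLinearMap.comp_apply, coeff_proj,
      ← indicator_indicator]

theorem isIdempotentElem_proj (hb : IsUnconditionalBasis b f) (A : Set ι) :
    IsIdempotentElem (hb.proj A) := by
  rw [IsIdempotentElem, proj_mul_proj, inter_self]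

theorem proj_injective (hb : IsUnconditionalBasis b f) : Injective hb.proj := by
  intro A B h
  ext m
  have := congr(f m ($h (b m)))
  simp only [coeff_proj, hb.coeff_basis] at this
  by_cases hA : m ∈ A <;> by_cases hB : m ∈ B <;> simp_all

theorem exists_norm_proj_le (hb : IsUnconditionalBasis b f) :
    ∃ C, ∀ A, ‖hb.proj A‖ ≤ C := by
  obtain ⟨C, hC₀, hC⟩ :=
    exists_norm_sum_apply_le (fun i => (f i).smulRight (b i)) fun x => (hb.hasSum x).summable
  refine ⟨C, fun A => ContinuousLinearMap.norm_strongTsum_le _ hC₀ fun s x => ?_⟩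
  simpa only [Finset.sum_map, Embedding.coe_subtype] using hC (s.map (Embedding.subtype _)) x

theorem finiteDimensional_range_proj (hb : IsUnconditionalBasis b f) {A : Set ι}
    (hA : A.Finite) :
    FiniteDimensional 𝕜 (LinearMap.range (hb.proj A : X →ₗ[𝕜] X)) := by
  have := hA.fintype
  have : FiniteDimensional 𝕜 (Submodule.span 𝕜 (b '' A)) :=
    FiniteDimensional.span_of_finite 𝕜 (hA.image b)
  refine Submodule.finiteDimensional_of_le (S₂ := Submodule.span 𝕜 (b '' A)) ?_
  rintro _ ⟨x, rfl⟩
  rw [ContinuousLinearMap.coe_coe, proj_apply, tsum_fintype]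
  exact Submodule.sum_mem _ fun i _ =>
    Submodule.smul_mem _ _ (Submodule.subset_span (mem_image_of_mem b i.2))

end IsUnconditionalBasis

end Basis

theorem ContinuousLinearMap.nonempty_range_equiv_of_comp_eq {𝕜 E F : Type*} [Semiring 𝕜]
    [TopologicalSpace E] [AddCommGroup E] [Module 𝕜 E] [TopologicalSpace F] [AddCommGroup F]
    [Module 𝕜 F] {T : E →L[𝕜] F} {U : F →L[𝕜] E} {P : F →L[𝕜] F}
    (hUT : U ∘L T = .id 𝕜 E) (hTU : T ∘L U = P) :
    Nonempty (LinearMap.range (P : F →ₗ[𝕜] F) ≃L[𝕜] E) := by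
  have hUT' : ∀ x, U (T x) = x := fun x => congr($hUT x)
  have hTU' : ∀ y, T (U y) = P y := fun y => congr($hTU y)
  have hT_mem : ∀ x, T x ∈ LinearMap.range (P : F →ₗ[𝕜] F) := fun x =>
    ⟨T x, by simp [← hTU', hUT']⟩
  refine ⟨(ContinuousLinearEquiv.equivOfInverse (T.codRestrict _ hT_mem)
    (U ∘L (LinearMap.range (P : F →ₗ[𝕜] F)).subtypeL) (fun x => hUT' x) ?_).symm⟩
  rintro ⟨_, y, rfl⟩
  ext
  simp [← hTU', hUT']

section Subsequence

variable {𝕜 X : Type*} [NontriviallyNormedField 𝕜] [NormedAddCommGroup X] [NormedSpace 𝕜 X]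
  [CompleteSpace X] {b : ℕ → X} {f : ℕ → StrongDual 𝕜 X}

theorem IsUnconditionalBasis.nonempty_range_proj_range_equiv (hb : IsUnconditionalBasis b f)
    {σ : ℕ → ℕ} (hσ : Injective σ) {c C : ℝ} (hc : 0 < c)
    (hequiv : ∀ (s : Finset ℕ) (a : ℕ → 𝕜),
      c * ‖∑ n ∈ s, a n • b n‖ ≤ ‖∑ n ∈ s, a n • b (σ n)‖ ∧
      ‖∑ n ∈ s, a n • b (σ n)‖ ≤ C * ‖∑ n ∈ s, a n • b n‖) :
    Nonempty (LinearMap.range (hb.proj (range σ) : X →ₗ[𝕜] X) ≃L[𝕜] X) := by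
  have hT : ∀ x, Summable fun n => f n x • b (σ n) := fun x =>
    (hb.hasSum x).summable.of_norm_sum_le_mul fun t => (hequiv t _).2
  have hU : ∀ x, Summable fun n => f (σ n) x • b n := fun x =>
    ((hb.hasSum x).summable.comp_injective hσ).of_norm_sum_le_mul (K := c⁻¹) fun t => by
      rw [inv_mul_eq_div, le_div_iff₀ hc, mul_comm]
      exact (hequiv t _).1
  let T : X →L[𝕜] X := .strongTsum (fun n => (f n).smulRight (b (σ n))) hT
  let U : X →L[𝕜] X := .strongTsum (fun n => (f (σ n)).smulRight (b n)) hU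
  have hcoeff_T : ∀ x n, f (σ n) (T x) = f n x := fun x => hb.coeff_tsum_comp hσ (hT x)
  have hcoeff_U : ∀ x n, f n (U x) = f (σ n) x := fun x => hb.coeff_tsum_comp injective_id (hU x)
  refine ContinuousLinearMap.nonempty_range_equiv_of_comp_eq (T := T) (U := U) ?_ ?_
  · ext x
    change ∑' n, f (σ n) (T x) • b n = x
    simp only [hcoeff_T]
    exact (hb.hasSum x).tsum_eq
  · refine ContinuousLinearMap.ext fun x => hb.ext_coeff fun m => ?_
    rw [hb.coeff_proj]
    by_cases hm : m ∈ range σ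
    · obtain ⟨n, rfl⟩ := hm
      rw [indicator_of_mem (mem_range_self n)]
      exact (hcoeff_T _ n).trans (hcoeff_U x n)
    · rw [indicator_of_notMem hm]
      exact hb.coeff_tsum_comp_of_notMem (hT _) hm

end Subsequence

/-- Codes of the finite prefixes of `s`: two sequences share only the prefixes preceding their
first difference, so these sets form an almost disjoint family indexed by `ℕ → Bool`. -/
def prefixCodes (s : ℕ → Bool) : Set ℕ :=
  range fun n => Encodable.encode ((List.range n).map s)

theorem prefixCodes_infinite (s : ℕ → Bool) : (prefixCodes s).Infinite :=
  infinite_range_of_injective fun m n h => by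
    simpa using congrArg List.length (Encodable.encode_injective h)

theorem finite_prefixCodes_inter {s t : ℕ → Bool} (hst : s ≠ t) :
    (prefixCodes s ∩ prefixCodes t).Finite := by
  obtain ⟨k, hk⟩ := ne_iff.1 hst
  refine ((finite_Iic k).image fun n => Encodable.encode ((List.range n).map s)).subset ?_
  rintro _ ⟨⟨n, rfl⟩, m, hm⟩
  have hlist := Encodable.encode_injective hm
  obtain rfl : m = n := by simpa using congrArg List.length hlist
  refine ⟨m, mem_Iic.2 (not_lt.1 fun hkm => hk ?_), rfl⟩
  exact (List.map_inj_left.1 hlist k (List.mem_range.2 hkm)).symm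

theorem prefixCodes_injective : Injective prefixCodes := fun s t h => by
  by_contra hst
  have := finite_prefixCodes_inter hst
  rw [h, inter_self] at this
  exact prefixCodes_infinite t this

/-- If `X` is a Banach space with a subsymmetric Schauder basis, then `B(X)` admits a
uniformly bounded family of continuum many commuting, pairwise almost orthogonal
idempotents, each of whose ranges is isomorphic to `X`. -/
theorem exists_continuum_almost_orthogonal_idempotents
    {X : Type*} [NormedAddCommGroup X] [NormedSpace ℂ X] [CompleteSpace X]
    (b : ℕ → X) (f : ℕ → StrongDual ℂ X)
    (hbiorth : ∀ m n, f m (b n) = if m = n then 1 else 0)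
    (hunc : ∀ x : X, HasSum (fun n => f n x • b n) x)
    (hsubsym : ∀ σ : ℕ → ℕ, StrictMono σ →
      ∃ c C : ℝ, 0 < c ∧
        ∀ (s : Finset ℕ) (a : ℕ → ℂ),
          c * ‖∑ n ∈ s, a n • b n‖ ≤ ‖∑ n ∈ s, a n • b (σ n)‖ ∧
          ‖∑ n ∈ s, a n • b (σ n)‖ ≤ C * ‖∑ n ∈ s, a n • b n‖) :
    ∃ Q : Set (X →L[ℂ] X),
      Cardinal.mk Q = Cardinal.continuum ∧
      (∃ C : ℝ, ∀ P ∈ Q, ‖P‖ ≤ C) ∧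
      (∀ P ∈ Q, IsIdempotentElem P) ∧
      (∀ P ∈ Q, ∀ R ∈ Q, P * R = R * P) ∧
      (∀ P ∈ Q, ∀ R ∈ Q, P ≠ R →
        FiniteDimensional ℂ (LinearMap.range ((P * R : X →L[ℂ] X) : X →ₗ[ℂ] X)) ∧
        FiniteDimensional ℂ (LinearMap.range ((R * P : X →L[ℂ] X) : X →ₗ[ℂ] X))) ∧
      (∀ P ∈ Q, Nonempty ((LinearMap.range (P : X →ₗ[ℂ] X)) ≃L[ℂ] X)) := by
  have hb : IsUnconditionalBasis b f := ⟨hbiorth, hunc⟩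
  have hinj : Injective (hb.proj ∘ prefixCodes) := hb.proj_injective.comp prefixCodes_injective
  obtain ⟨C, hC⟩ := hb.exists_norm_proj_le
  refine ⟨range (hb.proj ∘ prefixCodes), ?_, ⟨C, ?_⟩, ?_, ?_, ?_, ?_⟩
  · simpa using Cardinal.mk_range_eq_of_injective hinj
  · rintro _ ⟨s, rfl⟩
    exact hC _
  · rintro _ ⟨s, rfl⟩
    exact hb.isIdempotentElem_proj _
  · rintro _ ⟨s, rfl⟩ _ ⟨t, rfl⟩
    simp only [comp_apply, hb.proj_mul_proj, inter_comm]
  · rintro _ ⟨s, rfl⟩ _ ⟨t, rfl⟩ hne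
    have hst : s ≠ t := ne_of_apply_ne _ hne
    rw [comp_apply, comp_apply, hb.proj_mul_proj, hb.proj_mul_proj]
    exact ⟨hb.finiteDimensional_range_proj (finite_prefixCodes_inter hst),
      hb.finiteDimensional_range_proj (finite_prefixCodes_inter hst.symm)⟩
  · rintro _ ⟨s, rfl⟩
    have hA : (Set.ofPred (· ∈ prefixCodes s)).Infinite := prefixCodes_infinite s
    obtain ⟨c, C', hc, hequiv⟩ := hsubsym _ (Nat.nth_strictMono hA)
    have := hb.nonempty_range_proj_range_equiv (Nat.nth_strictMono hA).injective hc hequiv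
    rwa [Nat.range_nth_of_infinite hA] at this
end

section
/- Let X and Y be Banach spaces and let ψ, φ : B(X) → B(Y) be algebra homomorphisms with ‖ψ(A) − φ(A)‖ < ‖A‖ for every non-zero A ∈ B(X). If P ∈ B(X) is an idempotent of norm one, then ψ(P) = 0 if and only if φ(P) = 0. Consequently, ψ is injective if and only if φ is injective. -/
/-!
A norm-one idempotent `P` with `ψ P = 0` satisfies `‖φ P‖ = ‖ψ P - φ P‖ < 1`, and `φ P` is again
idempotent, so `φ P = 0` since a non-zero idempotent has norm at least one. For injectivity, every
non-zero `A ∈ B(X)` has a right multiple `A * T` that is a rank-one idempotent of norm one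
(Hahn–Banach), so a homomorphism on `B(X)` is injective iff it kills no norm-one idempotent.
-/

open ContinuousLinearMap

theorem IsIdempotentElem.eq_zero_of_norm_lt_one {R : Type*} [NonUnitalNormedRing R] {e : R}
    (he : IsIdempotentElem e) (h : ‖e‖ < 1) : e = 0 := by
  by_contra hne
  have hpos : 0 < ‖e‖ := norm_pos_iff.mpr hne
  have : ‖e‖ ≤ ‖e‖ * ‖e‖ := by
    calc ‖e‖ = ‖e * e‖ := by rw [he.eq]
      _ ≤ ‖e‖ * ‖e‖ := norm_mul_le e e
  nlinarith

theorem map_eq_zero_of_norm_sub_lt_of_isIdempotentElem {A B F : Type*} [NonUnitalNormedRing A]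
    [NonUnitalNormedRing B] [FunLike F A B] [MulHomClass F A B] {f g : F}
    (hfg : ∀ a : A, a ≠ 0 → ‖f a - g a‖ < ‖a‖) {e : A} (he : IsIdempotentElem e)
    (he₁ : ‖e‖ = 1) (hfe : f e = 0) : g e = 0 := by
  have hne : e ≠ 0 := by rintro rfl; simp at he₁
  have hlt : ‖g e‖ < 1 := by simpa [hfe, he₁] using hfg e hne
  exact (he.map g).eq_zero_of_norm_lt_one hlt

theorem ContinuousLinearMap.isIdempotentElem_smulRight {R M : Type*} [Semiring R]
    [TopologicalSpace R] [AddCommMonoid M] [TopologicalSpace M] [Module R M]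
    [ContinuousSMul R M] {c : M →L[R] R} {x : M} (hcx : c x = 1) :
    IsIdempotentElem (c.smulRight x) := by
  rw [IsIdempotentElem, mul_def, smulRight_comp_smulRight, hcx, one_smul]

theorem ContinuousLinearMap.mul_smulRight {R M : Type*} [CommSemiring R]
    [TopologicalSpace R] [AddCommMonoid M] [TopologicalSpace M] [Module R M]
    [ContinuousSMul R M] (A : M →L[R] M) (c : M →L[R] R) (x : M) :
    A * c.smulRight x = c.smulRight (A x) := by
  ext
  simp

section RankOne

variable {𝕜 X : Type*} [RCLike 𝕜] [NormedAddCommGroup X] [NormedSpace 𝕜 X]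

theorem exists_dual_apply_eq_one {x : X} (hx : x ≠ 0) :
    ∃ c : StrongDual 𝕜 X, c x = 1 ∧ ‖c‖ * ‖x‖ = 1 := by
  obtain ⟨g, hg₁, hgx⟩ := exists_dual_vector 𝕜 x (norm_ne_zero_iff.mpr hx)
  have hx₀ : (‖x‖ : 𝕜) ≠ 0 := by exact_mod_cast norm_ne_zero_iff.mpr hx
  refine ⟨(‖x‖ : 𝕜)⁻¹ • g, ?_, ?_⟩
  · simp [hgx, inv_mul_cancel₀ hx₀]
  · simp [norm_smul, hg₁, inv_mul_cancel₀ (norm_ne_zero_iff.mpr hx)]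

theorem ContinuousLinearMap.exists_isIdempotentElem_mul_of_ne_zero {A : X →L[𝕜] X} (hA : A ≠ 0) :
    ∃ T : X →L[𝕜] X, IsIdempotentElem (A * T) ∧ ‖A * T‖ = 1 := by
  obtain ⟨x, hx⟩ : ∃ x, A x ≠ 0 := by
    by_contra! h
    exact hA (ext h)
  obtain ⟨c, hcx, hc⟩ := exists_dual_apply_eq_one (𝕜 := 𝕜) hx
  refine ⟨c.smulRight x, ?_, ?_⟩ <;> rw [mul_smulRight]
  · exact isIdempotentElem_smulRight hcx
  · rw [norm_smulRight_apply, hc]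

theorem ContinuousLinearMap.injective_iff_map_ne_zero_of_isIdempotentElem {B F : Type*}
    [NonUnitalRing B] [FunLike F (X →L[𝕜] X) B] [NonUnitalRingHomClass F (X →L[𝕜] X) B]
    (φ : F) :
    Function.Injective φ ↔ ∀ P : X →L[𝕜] X, IsIdempotentElem P → ‖P‖ = 1 → φ P ≠ 0 := by
  rw [injective_iff_map_eq_zero]
  constructor
  · rintro hφ P - hP₁ hφP
    simp [hφ P hφP] at hP₁
  · intro h A hφA
    by_contra hA
    obtain ⟨T, hAT, hAT₁⟩ := exists_isIdempotentElem_mul_of_ne_zero hA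
    exact h _ hAT hAT₁ (by rw [map_mul, hφA, zero_mul])

end RankOne

theorem kernel_idempotents_and_injectivity_stable_general
    {X Y : Type*}
    [NormedAddCommGroup X] [NormedSpace ℂ X]
    [NormedAddCommGroup Y] [NormedSpace ℂ Y]
    (ψ φ : (X →L[ℂ] X) →ₙₐ[ℂ] (Y →L[ℂ] Y))
    (hclose : ∀ A : X →L[ℂ] X, A ≠ 0 → ‖ψ A - φ A‖ < ‖A‖) :
    (∀ P : X →L[ℂ] X, IsIdempotentElem P → ‖P‖ = 1 → (ψ P = 0 ↔ φ P = 0)) ∧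
      (Function.Injective ψ ↔ Function.Injective φ) := by
  have hclose' : ∀ A : X →L[ℂ] X, A ≠ 0 → ‖φ A - ψ A‖ < ‖A‖ := fun A hA =>
    norm_sub_rev (φ A) (ψ A) ▸ hclose A hA
  have hker : ∀ P : X →L[ℂ] X, IsIdempotentElem P → ‖P‖ = 1 → (ψ P = 0 ↔ φ P = 0) :=
    fun P hP hP₁ => ⟨map_eq_zero_of_norm_sub_lt_of_isIdempotentElem hclose hP hP₁,
      map_eq_zero_of_norm_sub_lt_of_isIdempotentElem hclose' hP hP₁⟩
  refine ⟨hker, ?_⟩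
  simp only [injective_iff_map_ne_zero_of_isIdempotentElem]
  exact forall₃_congr fun P hP hP₁ => (hker P hP hP₁).not

/-- If `ψ, φ : B(X) → B(Y)` are algebra homomorphisms with `‖ψ(A) - φ(A)‖ < ‖A‖` for every
non-zero `A`, then for every norm one idempotent `P` we have `ψ(P) = 0 ↔ φ(P) = 0`;
consequently `ψ` is injective iff `φ` is injective. -/
theorem kernel_idempotents_and_injectivity_stable
    {X Y : Type*}
    [NormedAddCommGroup X] [NormedSpace ℂ X] [CompleteSpace X]
    [NormedAddCommGroup Y] [NormedSpace ℂ Y] [CompleteSpace Y]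
    (ψ φ : (X →L[ℂ] X) →ₙₐ[ℂ] (Y →L[ℂ] Y))
    (hclose : ∀ A : X →L[ℂ] X, A ≠ 0 → ‖ψ A - φ A‖ < ‖A‖) :
    (∀ P : X →L[ℂ] X, IsIdempotentElem P → ‖P‖ = 1 → (ψ P = 0 ↔ φ P = 0)) ∧
      (Function.Injective ψ ↔ Function.Injective φ) :=
  kernel_idempotents_and_injectivity_stable_general ψ φ hclose
end

section
/- Let X and Y be Banach spaces and let ψ, φ : B(X) → B(Y) be algebra homomorphisms with ‖ψ(A) − φ(A)‖ < ‖A‖ for every non-zero A ∈ B(X). If P ∈ B(X) is an idempotent of norm one, then the ranges of ψ(P) and φ(P) are isomorphic as Banach spaces. -/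
/-!
For idempotents `p`, `q` of a ring, `u = 1 - (p - q)²` commutes with `p` and `q` and satisfies
`u p = p q p`, `u q = q p q`. When `u` is invertible (e.g. `‖p - q‖ < 1` in a Banach algebra),
`a = u⁻¹ p q` and `b = q p` satisfy `a b = p` and `b a = q`; then `q b` and `p a` restrict to
mutually inverse maps between the ranges of `p` and `q`.
-/

def IsMurrayVonNeumannEquiv {R : Type*} [Mul R] (p q : R) : Prop :=
  ∃ a b : R, a * b = p ∧ b * a = q

namespace IsIdempotentElem

section Ring

variable {R : Type*} [Ring R] {p q : R}

theorem one_sub_sub_mul_sub_mul_self (hp : IsIdempotentElem p) (hq : IsIdempotentElem q) :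
    (1 - (p - q) * (p - q)) * p = p * q * p := by
  simp only [sub_mul, mul_sub, one_mul, mul_assoc, hp.eq, hq.eq]
  abel

theorem mul_one_sub_sub_mul_sub (hp : IsIdempotentElem p) (hq : IsIdempotentElem q) :
    p * (1 - (p - q) * (p - q)) = p * q * p := by
  simp only [sub_mul, mul_sub, mul_one, ← mul_assoc, hp.eq, hq.eq]
  abel

theorem commute_one_sub_sub_mul_sub (hp : IsIdempotentElem p) (hq : IsIdempotentElem q) :
    Commute (1 - (p - q) * (p - q)) p :=
  (hp.one_sub_sub_mul_sub_mul_self hq).trans (hp.mul_one_sub_sub_mul_sub hq).symm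

theorem isMurrayVonNeumannEquiv_of_isUnit (hp : IsIdempotentElem p) (hq : IsIdempotentElem q)
    (hu : IsUnit (1 - (p - q) * (p - q))) : IsMurrayVonNeumannEquiv p q := by
  obtain ⟨u, hu⟩ := hu
  have hsq : (q - p) * (q - p) = (p - q) * (p - q) := by noncomm_ring
  have hup : Commute (↑u⁻¹ : R) p := (hu ▸ hp.commute_one_sub_sub_mul_sub hq).units_inv_left
  have huq : Commute (↑u⁻¹ : R) q :=
    (hu ▸ hsq ▸ hq.commute_one_sub_sub_mul_sub hp).units_inv_left
  refine ⟨↑u⁻¹ * p * q, q * p, ?_, ?_⟩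
  · calc ↑u⁻¹ * p * q * (q * p) = ↑u⁻¹ * (p * (q * q) * p) := by simp only [mul_assoc]
      _ = ↑u⁻¹ * (↑u * p) := by rw [hq.eq, hu, hp.one_sub_sub_mul_sub_mul_self hq]
      _ = p := u.inv_mul_cancel_left p
  · calc q * p * (↑u⁻¹ * p * q) = ↑u⁻¹ * (q * p) * (p * q) := by
          rw [(huq.mul_right hup).eq]
          simp only [mul_assoc]
      _ = ↑u⁻¹ * (q * (p * p) * q) := by simp only [mul_assoc]
      _ = ↑u⁻¹ * (↑u * q) := by rw [hp.eq, hu, ← hsq, hq.one_sub_sub_mul_sub_mul_self hp]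
      _ = q := u.inv_mul_cancel_left q

end Ring

theorem isMurrayVonNeumannEquiv_of_norm_sub_lt_one {R : Type*} [NormedRing R]
    [HasSummableGeomSeries R] {p q : R} (hp : IsIdempotentElem p) (hq : IsIdempotentElem q)
    (h : ‖p - q‖ < 1) : IsMurrayVonNeumannEquiv p q :=
  hp.isMurrayVonNeumannEquiv_of_isUnit hq <| isUnit_one_sub_of_norm_lt_one <|
    (norm_mul_le _ _).trans_lt <| by nlinarith [norm_nonneg (p - q)]

end IsIdempotentElem

open LinearMap

namespace ContinuousLinearMap

variable {R M : Type*} [Semiring R] [TopologicalSpace M] [AddCommMonoid M] [Module R M]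

theorem apply_eq_self_of_mem_range {p : M →L[R] M} (hp : IsIdempotentElem p) {x : M}
    (hx : x ∈ range (p : M →ₗ[R] M)) : p x = x := by
  obtain ⟨y, rfl⟩ := hx
  exact congr($hp y)

theorem nonempty_rangeEquiv_of_isMurrayVonNeumannEquiv {p q : M →L[R] M}
    (hp : IsIdempotentElem p) (hq : IsIdempotentElem q) (h : IsMurrayVonNeumannEquiv p q) :
    Nonempty (range (p : M →ₗ[R] M) ≃L[R] range (q : M →ₗ[R] M)) := by
  obtain ⟨a, b, hab, hba⟩ := h
  have round_trip {p q a b : M →L[R] M} (hp : IsIdempotentElem p) (hab : a * b = p)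
      (hba : b * a = q) (x : range (p : M →ₗ[R] M)) : (p * a) ((q * b) x) = x := by
    have : p * a * (q * b) = p :=
      calc p * a * (q * b) = p * (a * b) * (a * b) := by simp only [← hba, mul_assoc]
        _ = p := by rw [hab, hp.eq, hp.eq]
    change (p * a * (q * b)) x = x
    rw [this, apply_eq_self_of_mem_range hp x.2]
  exact ⟨.equivOfInverse
    (.codRestrict ((q * b).comp (range (p : M →ₗ[R] M)).subtypeL) _ fun x => ⟨b x, rfl⟩)
    (.codRestrict ((p * a).comp (range (q : M →ₗ[R] M)).subtypeL) _ fun x => ⟨a x, rfl⟩)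
    (fun x => Subtype.ext (round_trip hp hab hba x))
    (fun x => Subtype.ext (round_trip hq hba hab x))⟩

end ContinuousLinearMap

theorem ranges_of_perturbed_idempotents_isomorphic_general
    {X Y : Type*}
    [NormedAddCommGroup X] [NormedSpace ℂ X]
    [NormedAddCommGroup Y] [NormedSpace ℂ Y] [CompleteSpace Y]
    (ψ φ : (X →L[ℂ] X) →ₙₐ[ℂ] (Y →L[ℂ] Y))
    (hclose : ∀ A : X →L[ℂ] X, A ≠ 0 → ‖ψ A - φ A‖ < ‖A‖)
    (P : X →L[ℂ] X) (hP : IsIdempotentElem P) (hPnorm : ‖P‖ = 1) :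
    Nonempty ((LinearMap.range (ψ P : Y →ₗ[ℂ] Y)) ≃L[ℂ] (LinearMap.range (φ P : Y →ₗ[ℂ] Y))) := by
  have hP_ne : P ≠ 0 := by
    rintro rfl
    simp at hPnorm
  have hnorm : ‖ψ P - φ P‖ < 1 := hPnorm ▸ hclose P hP_ne
  exact ContinuousLinearMap.nonempty_rangeEquiv_of_isMurrayVonNeumannEquiv (hP.map ψ) (hP.map φ)
    ((hP.map ψ).isMurrayVonNeumannEquiv_of_norm_sub_lt_one (hP.map φ) hnorm)

/-- If `ψ, φ : B(X) → B(Y)` are algebra homomorphisms with `‖ψ(A) - φ(A)‖ < ‖A‖` for every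
non-zero `A`, and `P ∈ B(X)` is an idempotent of norm one, then the ranges of `ψ(P)` and
`φ(P)` are isomorphic (linearly homeomorphic) Banach spaces. -/
theorem ranges_of_perturbed_idempotents_isomorphic
    {X Y : Type*}
    [NormedAddCommGroup X] [NormedSpace ℂ X] [CompleteSpace X]
    [NormedAddCommGroup Y] [NormedSpace ℂ Y] [CompleteSpace Y]
    (ψ φ : (X →L[ℂ] X) →ₙₐ[ℂ] (Y →L[ℂ] Y))
    (hclose : ∀ A : X →L[ℂ] X, A ≠ 0 → ‖ψ A - φ A‖ < ‖A‖)
    (P : X →L[ℂ] X) (hP : IsIdempotentElem P) (hPnorm : ‖P‖ = 1) :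
    Nonempty ((LinearMap.range (ψ P : Y →ₗ[ℂ] Y)) ≃L[ℂ] (LinearMap.range (φ P : Y →ₗ[ℂ] Y))) :=
  ranges_of_perturbed_idempotents_isomorphic_general ψ φ hclose P hP hPnorm
end

section
/- Let A and B be Banach algebras, J ⊆ A a closed two-sided ideal with a bounded approximate identity (e_γ), B unital and a dual Banach algebra, and ψ : A → B a continuous algebra homomorphism. Suppose p ∈ B is an idempotent which is the weak* limit along an ultrafilter extending the order filter of (ψ(e_γ)). Then p ψ(c) = ψ(c) = ψ(c) p for all c ∈ J, p ψ(a) p = p ψ(a) = ψ(a) p for all a ∈ A, and the map θ : A → B, θ(a) = (1 − p) ψ(a) (1 − p), is a continuous algebra homomorphism vanishing on J. -/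
open Filter NormedSpace Topology

/-!
For `c ∈ J` the nets `ψ(e_γ) ψ(c)` and `ψ(c) ψ(e_γ)` converge to `ψ(c)` in norm, hence weak*,
while by separate weak*-continuity of multiplication they converge weak* to `p ψ(c)` and
`ψ(c) p`; so `p` is a unit for `ψ(J)`, and `p² = p` because `ψ(e_γ) ∈ ψ(J)`. Since
`ψ(e_γ) ψ(a)` and `ψ(a) ψ(e_γ)` lie in `ψ(J)`, passing to the limit in
`ψ(e_γ) ψ(a) p = ψ(e_γ) ψ(a)` and `p ψ(a) ψ(e_γ) = ψ(a) ψ(e_γ)` gives `p ψ(a) p = p ψ(a)` and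
`p ψ(a) p = ψ(a) p`, so `p` commutes with `ψ(A)`. Compressing `ψ` by the idempotent `1 - p`,
which also commutes with `ψ(A)`, is then again a homomorphism.
-/

section Compress

theorem IsIdempotentElem.mul_mul_self_of_commute {R : Type*} [Semigroup R] {q x : R}
    (hq : IsIdempotentElem q) (hx : Commute q x) : q * x * q = q * x := by
  rw [mul_assoc, ← hx.eq, ← mul_assoc, hq.eq]

variable {R A B : Type*} [Monoid R] [NonUnitalNonAssocSemiring A] [DistribMulAction R A]
  [NonUnitalSemiring B] [DistribMulAction R B] [IsScalarTower R B B] [SMulCommClass R B B]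

def NonUnitalAlgHom.compress (ψ : A →ₙₐ[R] B) {q : B} (hq : IsIdempotentElem q)
    (hcomm : ∀ a, Commute q (ψ a)) : A →ₙₐ[R] B where
  toFun a := q * ψ a * q
  map_smul' c a := by simp only [map_smul, mul_smul_comm, smul_mul_assoc, MonoidHom.id_apply]
  map_zero' := by simp only [map_zero, mul_zero, zero_mul]
  map_add' a a' := by simp only [map_add, mul_add, add_mul]
  map_mul' a a' := by
    rw [hq.mul_mul_self_of_commute (hcomm _), hq.mul_mul_self_of_commute (hcomm a),
      hq.mul_mul_self_of_commute (hcomm a'), map_mul]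
    simp only [← mul_assoc]
    rw [hq.mul_mul_self_of_commute (hcomm a)]

end Compress

section DualBanachAlgebra

variable {𝕜 B E : Type*} [NontriviallyNormedField 𝕜] [NonUnitalNormedRing B] [NormedSpace 𝕜 B]
  [NormedAddCommGroup E] [NormedSpace 𝕜 E] (ι : B ≃ₗᵢ[𝕜] StrongDual 𝕜 E)

noncomputable def weakStar (b : B) : WeakDual 𝕜 E := StrongDual.toWeakDual (ι b)

/-- `T : B → B` is continuous for the weak* topology of `B`. -/
def WeakStarContinuous (T : B → B) : Prop :=
  Continuous fun φ : WeakDual 𝕜 E => weakStar ι (T (ι.symm (StrongDual.toWeakDual.symm φ)))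

variable {ι}

theorem weakStar_injective : Function.Injective (weakStar ι) := fun _ _ h =>
  ι.injective ((StrongDual.toWeakDual_inj _ _).mp h)

theorem continuous_weakStar : Continuous (weakStar ι) :=
  Dual.toWeakDual_continuous.comp ι.continuous

theorem tendsto_weakStar_iff {Γ : Type*} {l : Filter Γ} {f : Γ → B} {b : B} :
    Tendsto (fun i => weakStar ι (f i)) l (𝓝 (weakStar ι b)) ↔
      ∀ x, Tendsto (fun i => ι (f i) x) l (𝓝 (ι b x)) :=
  tendsto_iff_forall_eval_tendsto_topDualPairing

theorem eq_of_tendsto_weakStar {Γ : Type*} {l : Filter Γ} [l.NeBot] {f : Γ → B} {x y : B}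
    (hx : Tendsto (fun i => weakStar ι (f i)) l (𝓝 (weakStar ι x)))
    (hy : Tendsto (fun i => weakStar ι (f i)) l (𝓝 (weakStar ι y))) : x = y :=
  weakStar_injective (tendsto_nhds_unique hx hy)

theorem WeakStarContinuous.tendsto {T : B → B} (hT : WeakStarContinuous ι T) {Γ : Type*}
    {l : Filter Γ} {f : Γ → B} {b : B}
    (hf : Tendsto (fun i => weakStar ι (f i)) l (𝓝 (weakStar ι b))) :
    Tendsto (fun i => weakStar ι (T (f i))) l (𝓝 (weakStar ι (T b))) := by
  have key := ((show Continuous _ from hT).tendsto (weakStar ι b)).comp hf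
  simpa only [Function.comp_def, weakStar, LinearEquiv.symm_apply_apply,
    LinearIsometryEquiv.symm_apply_apply] using key

variable {Γ : Type*} {l : Filter Γ} [l.NeBot] {f : Γ → B} {p : B}
  (hp : Tendsto (fun i => weakStar ι (f i)) l (𝓝 (weakStar ι p)))
include hp

theorem mul_eq_right_of_tendsto_weakStar (hmul_right : ∀ b : B, WeakStarContinuous ι (· * b))
    {b : B} (hb : Tendsto (fun i => f i * b) l (𝓝 b)) : p * b = b :=
  eq_of_tendsto_weakStar ((hmul_right b).tendsto hp) ((continuous_weakStar.tendsto b).comp hb)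

theorem mul_eq_left_of_tendsto_weakStar (hmul_left : ∀ b : B, WeakStarContinuous ι (b * ·))
    {b : B} (hb : Tendsto (fun i => b * f i) l (𝓝 b)) : b * p = b :=
  eq_of_tendsto_weakStar ((hmul_left b).tendsto hp) ((continuous_weakStar.tendsto b).comp hb)

theorem isIdempotentElem_of_tendsto_weakStar (hmul_left : ∀ b : B, WeakStarContinuous ι (b * ·))
    (hfix : ∀ i, p * f i = f i) : IsIdempotentElem p :=
  eq_of_tendsto_weakStar ((hmul_left p).tendsto hp) (by simpa only [hfix] using hp)

theorem commute_of_tendsto_weakStar (hmul_left : ∀ b : B, WeakStarContinuous ι (b * ·))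
    (hmul_right : ∀ b : B, WeakStarContinuous ι (· * b)) {x : B}
    (hright : ∀ i, f i * x * p = f i * x) (hleft : ∀ i, p * (x * f i) = x * f i) : Commute p x := by
  have hfx := (hmul_right x).tendsto hp
  have hxf := (hmul_left x).tendsto hp
  have hpxp : p * x * p = p * x :=
    eq_of_tendsto_weakStar ((hmul_right p).tendsto hfx) (by simpa only [hright] using hfx)
  have hpxp' : p * (x * p) = x * p :=
    eq_of_tendsto_weakStar ((hmul_left p).tendsto hxf) (by simpa only [hleft] using hxf)
  calc p * x = p * x * p := hpxp.symm
    _ = x * p := by rw [mul_assoc, hpxp']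

end DualBanachAlgebra

theorem corner_hom_of_bai_ideal_general
    {A B E : Type*}
    [NonUnitalNormedRing A] [NormedSpace ℂ A]
    [NormedRing B] [NormedAlgebra ℂ B]
    [NormedAddCommGroup E] [NormedSpace ℂ E]
    -- `B` is a dual Banach algebra with predual `E`:
    (ι : B ≃ₗᵢ[ℂ] StrongDual ℂ E)
    (hmul_left : ∀ b : B, Continuous fun φ : WeakDual ℂ E =>
      StrongDual.toWeakDual (ι (b * ι.symm (StrongDual.toWeakDual.symm φ))))
    (hmul_right : ∀ b : B, Continuous fun φ : WeakDual ℂ E =>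
      StrongDual.toWeakDual (ι (ι.symm (StrongDual.toWeakDual.symm φ) * b)))
    -- `J` is a closed two-sided ideal of `A`:
    (J : TwoSidedIdeal A)
    -- `(e γ)` is a bounded approximate identity for `J`:
    {Γ : Type*} [Preorder Γ] [IsDirected Γ (· ≤ ·)] [Nonempty Γ]
    (e : Γ → A) (heJ : ∀ γ, e γ ∈ J)
    (hbai : ∀ c ∈ J, Tendsto (fun γ => e γ * c) atTop (nhds c) ∧
      Tendsto (fun γ => c * e γ) atTop (nhds c))
    -- `ψ` is a continuous algebra homomorphism:
    (ψ : A →ₙₐ[ℂ] B) (hψcont : Continuous ψ)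
    -- `p` is an idempotent, the weak* limit of `ψ (e γ)` along an ultrafilter `U`
    -- extending the order filter:
    (U : Ultrafilter Γ) (hU : (atTop : Filter Γ) ≤ (U : Filter Γ))
    (p : B)
    (hplim : ∀ x : E, Tendsto (fun γ => ι (ψ (e γ)) x) (U : Filter Γ) (nhds (ι p x))) :
    (∀ c ∈ J, p * ψ c = ψ c ∧ ψ c * p = ψ c) ∧
    (∀ a : A, p * ψ a * p = p * ψ a ∧ p * ψ a = ψ a * p) ∧
    (Continuous fun a : A => (1 - p) * ψ a * (1 - p)) ∧
    (∀ a a' : A, (1 - p) * ψ (a * a') * (1 - p)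
        = ((1 - p) * ψ a * (1 - p)) * ((1 - p) * ψ a' * (1 - p))) ∧
    (∀ a a' : A, (1 - p) * ψ (a + a') * (1 - p)
        = (1 - p) * ψ a * (1 - p) + (1 - p) * ψ a' * (1 - p)) ∧
    (∀ (c : ℂ) (a : A), (1 - p) * ψ (c • a) * (1 - p) = c • ((1 - p) * ψ a * (1 - p))) ∧
    (∀ c ∈ J, (1 - p) * ψ c * (1 - p) = 0) := by
  -- `atTop ≤ U`, so the net itself converges weak* to `p`.
  have hplim' : Tendsto (fun γ => weakStar ι (ψ (e γ))) atTop (𝓝 (weakStar ι p)) :=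
    (tendsto_weakStar_iff.2 hplim).mono_left hU
  have hψe : ∀ c ∈ J, Tendsto (fun γ => ψ (e γ) * ψ c) atTop (𝓝 (ψ c)) ∧
      Tendsto (fun γ => ψ c * ψ (e γ)) atTop (𝓝 (ψ c)) := fun c hc => by
    simpa only [Function.comp_def, map_mul] using
      And.intro ((hψcont.tendsto c).comp (hbai c hc).1) ((hψcont.tendsto c).comp (hbai c hc).2)
  have hunit : ∀ c ∈ J, p * ψ c = ψ c ∧ ψ c * p = ψ c := fun c hc =>
    ⟨mul_eq_right_of_tendsto_weakStar hplim' hmul_right (hψe c hc).1,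
      mul_eq_left_of_tendsto_weakStar hplim' hmul_left (hψe c hc).2⟩
  have hidem : IsIdempotentElem p :=
    isIdempotentElem_of_tendsto_weakStar hplim' hmul_left fun γ => (hunit _ (heJ γ)).1
  have hcomm : ∀ a, Commute p (ψ a) := fun a =>
    commute_of_tendsto_weakStar hplim' hmul_left hmul_right
      (fun γ => by simpa only [map_mul] using (hunit _ (J.mul_mem_right _ a (heJ γ))).2)
      (fun γ => by simpa only [map_mul] using (hunit _ (J.mul_mem_left a _ (heJ γ))).1)
  let θ := ψ.compress hidem.one_sub fun a => (Commute.one_left _).sub_left (hcomm a)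
  refine ⟨hunit, fun a => ⟨hidem.mul_mul_self_of_commute (hcomm a), hcomm a⟩,
    (continuous_const.mul hψcont).mul continuous_const, θ.map_mul, θ.map_add, θ.map_smul,
    fun c hc => ?_⟩
  rw [sub_mul, one_mul, (hunit c hc).1, sub_self, zero_mul]

/-- Let `A` be a Banach algebra, `J` a closed two-sided ideal of `A` with a bounded
approximate identity `(e_γ)`, and `B` a unital dual Banach algebra, realised as the dual
of a Banach space `E` via an isometric isomorphism `ι` for which multiplication on `B` is
separately weak*-continuous. Let `ψ : A → B` be a continuous algebra homomorphism, and let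
`p ∈ B` be an idempotent which is the weak* limit of `(ψ(e_γ))` along an ultrafilter
extending the order filter. Then `p ψ(c) = ψ(c) = ψ(c) p` for `c ∈ J`,
`p ψ(a) p = p ψ(a) = ψ(a) p` for `a ∈ A`, and `θ : a ↦ (1 - p) ψ(a) (1 - p)` is a
continuous algebra homomorphism vanishing on `J`. -/
theorem corner_hom_of_bai_ideal
    {A B E : Type*}
    [NonUnitalNormedRing A] [NormedSpace ℂ A]
    [IsScalarTower ℂ A A] [SMulCommClass ℂ A A] [CompleteSpace A]
    [NormedRing B] [NormedAlgebra ℂ B] [CompleteSpace B]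
    [NormedAddCommGroup E] [NormedSpace ℂ E] [CompleteSpace E]
    -- `B` is a dual Banach algebra with predual `E`:
    (ι : B ≃ₗᵢ[ℂ] StrongDual ℂ E)
    (hmul_left : ∀ b : B, Continuous fun φ : WeakDual ℂ E =>
      StrongDual.toWeakDual (ι (b * ι.symm (StrongDual.toWeakDual.symm φ))))
    (hmul_right : ∀ b : B, Continuous fun φ : WeakDual ℂ E =>
      StrongDual.toWeakDual (ι (ι.symm (StrongDual.toWeakDual.symm φ) * b)))
    -- `J` is a closed two-sided ideal of `A`:
    (J : TwoSidedIdeal A) (hJclosed : IsClosed (J : Set A))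
    -- `(e γ)` is a bounded approximate identity for `J`:
    {Γ : Type*} [Preorder Γ] [IsDirected Γ (· ≤ ·)] [Nonempty Γ]
    (e : Γ → A) (heJ : ∀ γ, e γ ∈ J) (hebd : ∃ C : ℝ, ∀ γ, ‖e γ‖ ≤ C)
    (hbai : ∀ c ∈ J, Tendsto (fun γ => e γ * c) atTop (nhds c) ∧
      Tendsto (fun γ => c * e γ) atTop (nhds c))
    -- `ψ` is a continuous algebra homomorphism:
    (ψ : A →ₙₐ[ℂ] B) (hψcont : Continuous ψ)
    -- `p` is an idempotent, the weak* limit of `ψ (e γ)` along an ultrafilter `U`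
    -- extending the order filter:
    (U : Ultrafilter Γ) (hU : (atTop : Filter Γ) ≤ (U : Filter Γ))
    (p : B) (hp : IsIdempotentElem p)
    (hplim : ∀ x : E, Tendsto (fun γ => ι (ψ (e γ)) x) (U : Filter Γ) (nhds (ι p x))) :
    (∀ c ∈ J, p * ψ c = ψ c ∧ ψ c * p = ψ c) ∧
    (∀ a : A, p * ψ a * p = p * ψ a ∧ p * ψ a = ψ a * p) ∧
    (Continuous fun a : A => (1 - p) * ψ a * (1 - p)) ∧
    (∀ a a' : A, (1 - p) * ψ (a * a') * (1 - p)
        = ((1 - p) * ψ a * (1 - p)) * ((1 - p) * ψ a' * (1 - p))) ∧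
    (∀ a a' : A, (1 - p) * ψ (a + a') * (1 - p)
        = (1 - p) * ψ a * (1 - p) + (1 - p) * ψ a' * (1 - p)) ∧
    (∀ (c : ℂ) (a : A), (1 - p) * ψ (c • a) * (1 - p) = c • ((1 - p) * ψ a * (1 - p))) ∧
    (∀ c ∈ J, (1 - p) * ψ c * (1 - p) = 0) :=
  corner_hom_of_bai_ideal_general ι hmul_left hmul_right J e heJ hbai ψ hψcont U hU p hplim
end

section
/- Let B be a dual Banach algebra and let (q_γ)_{γ ∈ Γ} be a bounded net in B such that for each γ, the net (q_ω q_γ)_ω converges in norm to q_γ. If U is an ultrafilter on Γ extending the order filter, then the weak* limit p = w*-lim_{γ → U} q_γ exists in B and p is an idempotent. -/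
/-!
By Banach–Alaoglu the bounded net has a weak* limit `p` along `U`. Weak* continuity of right
multiplication by `q γ` gives `q ω q γ → p q γ` along `U`, while `q ω q γ → q γ` in norm along
the order filter, which `U` refines; hence `p q γ = q γ` for every `γ`. Weak* continuity of left
multiplication by `p` then gives `q γ = p q γ → p p` along `U`, so `p p = p`.
-/

open Filter Topology NormedSpace

theorem WeakDual.exists_tendsto_ultrafilter_of_norm_le {𝕜 E ι : Type*}
    [NontriviallyNormedField 𝕜] [ProperSpace 𝕜] [SeminormedAddCommGroup E] [NormedSpace 𝕜 E]
    (f : ι → StrongDual 𝕜 E) {C : ℝ} (hf : ∀ i, ‖f i‖ ≤ C) (U : Ultrafilter ι) :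
    ∃ φ : WeakDual 𝕜 E, Tendsto (fun i => StrongDual.toWeakDual (f i)) U (𝓝 φ) := by
  have hball : ∀ᶠ i in (U : Filter ι),
      StrongDual.toWeakDual (f i) ∈ toStrongDual ⁻¹' Metric.closedBall 0 C :=
    univ_mem' fun i => by simpa using hf i
  obtain ⟨φ, -, hφ⟩ := (isCompact_closedBall 0 C).ultrafilter_le_nhds (U.map _)
    (le_principal_iff.mpr hball)
  exact ⟨φ, hφ⟩

section TransportedTopology

-- `M` carries the topology of `X` transported along `e` (for a dual Banach algebra, the weak*
-- topology), in which only the multiplications named in each hypothesis need be continuous.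
variable {M X : Type*} [Mul M] [TopologicalSpace X] [T2Space X] (e : M ≃ X)

theorem mul_eq_right_of_tendsto_of_continuous_mul_right {b : M}
    (hb : Continuous fun x => e (e.symm x * b)) {ι : Type*} {l l' : Filter ι} [NeBot l]
    (hl : l ≤ l') {q : ι → M} {p : M} (hq : Tendsto (fun i => e (q i)) l' (𝓝 (e p)))
    (hqb : Tendsto (fun i => e (q i * b)) l (𝓝 (e b))) : p * b = b := by
  have hlim : Tendsto (fun i => e (q i * b)) l (𝓝 (e (p * b))) := by
    simpa [Function.comp_def] using ((hb.tendsto (e p)).comp hq).mono_left hl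
  exact e.injective (tendsto_nhds_unique hlim hqb)

theorem isIdempotentElem_of_tendsto_of_continuous_mul_left {p : M}
    (hp : Continuous fun x => e (p * e.symm x)) {ι : Type*} {l : Filter ι} [NeBot l]
    {q : ι → M} (hq : Tendsto (fun i => e (q i)) l (𝓝 (e p))) (hpq : ∀ i, p * q i = q i) :
    IsIdempotentElem p := by
  have hlim : Tendsto (fun i => e (q i)) l (𝓝 (e (p * p))) := by
    simpa [Function.comp_def, hpq] using (hp.tendsto (e p)).comp hq
  exact e.injective (tendsto_nhds_unique hlim hq)

end TransportedTopology

theorem wstar_limit_idempotent_general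
    {B E : Type*}
    [NormedRing B] [NormedAlgebra ℂ B]
    [NormedAddCommGroup E] [NormedSpace ℂ E]
    -- `B` is a dual Banach algebra with predual `E`:
    (ι : B ≃ₗᵢ[ℂ] StrongDual ℂ E)
    (hmul_left : ∀ b : B, Continuous fun φ : WeakDual ℂ E =>
      StrongDual.toWeakDual (ι (b * ι.symm (StrongDual.toWeakDual.symm φ))))
    (hmul_right : ∀ b : B, Continuous fun φ : WeakDual ℂ E =>
      StrongDual.toWeakDual (ι (ι.symm (StrongDual.toWeakDual.symm φ) * b)))
    -- `(q γ)` is a bounded net: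
    {Γ : Type*} [Preorder Γ] [IsDirected Γ (· ≤ ·)] [Nonempty Γ]
    (q : Γ → B) (hbd : ∃ C : ℝ, ∀ γ, ‖q γ‖ ≤ C)
    (hconv : ∀ γ : Γ, Tendsto (fun ω => q ω * q γ) atTop (nhds (q γ)))
    (U : Ultrafilter Γ) (hU : (atTop : Filter Γ) ≤ (U : Filter Γ)) :
    ∃ p : B,
      (∀ x : E, Tendsto (fun γ => ι (q γ) x) (U : Filter Γ) (nhds (ι p x))) ∧
      IsIdempotentElem p := by
  obtain ⟨C, hC⟩ := hbd
  let e : B ≃ WeakDual ℂ E := ι.toEquiv.trans StrongDual.toWeakDual.toEquiv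
  have he : Continuous e := Dual.toWeakDual_continuous.comp ι.continuous
  obtain ⟨φ, hφ⟩ := WeakDual.exists_tendsto_ultrafilter_of_norm_le (fun γ => ι (q γ))
    (fun γ => (ι.norm_map (q γ)).trans_le (hC γ)) U
  have hq : Tendsto (fun γ => e (q γ)) U (𝓝 (e (e.symm φ))) := by
    rw [e.apply_symm_apply]
    exact hφ
  have hpq : ∀ γ, e.symm φ * q γ = q γ := fun γ =>
    mul_eq_right_of_tendsto_of_continuous_mul_right e (hmul_right (q γ)) hU hq
      ((he.tendsto _).comp (hconv γ))
  exact ⟨e.symm φ, fun x => ((WeakDual.eval_continuous x).tendsto _).comp hq,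
    isIdempotentElem_of_tendsto_of_continuous_mul_left e (hmul_left _) (hq.mono_left hU) hpq⟩

/-- Let `B` be a dual Banach algebra, realised as the dual of a Banach space `E` via an
isometric isomorphism `ι` for which multiplication is separately weak*-continuous. If
`(q_γ)` is a bounded net in `B` such that `(q_ω q_γ)_ω → q_γ` in norm for each `γ`, and
`U` is an ultrafilter extending the order filter, then the weak* limit
`p = w*-lim_{γ → U} q_γ` exists in `B` and is an idempotent. -/
theorem wstar_limit_idempotent
    {B E : Type*}
    [NormedRing B] [NormedAlgebra ℂ B] [CompleteSpace B]
    [NormedAddCommGroup E] [NormedSpace ℂ E] [CompleteSpace E]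
    -- `B` is a dual Banach algebra with predual `E`:
    (ι : B ≃ₗᵢ[ℂ] StrongDual ℂ E)
    (hmul_left : ∀ b : B, Continuous fun φ : WeakDual ℂ E =>
      StrongDual.toWeakDual (ι (b * ι.symm (StrongDual.toWeakDual.symm φ))))
    (hmul_right : ∀ b : B, Continuous fun φ : WeakDual ℂ E =>
      StrongDual.toWeakDual (ι (ι.symm (StrongDual.toWeakDual.symm φ) * b)))
    -- `(q γ)` is a bounded net:
    {Γ : Type*} [Preorder Γ] [IsDirected Γ (· ≤ ·)] [Nonempty Γ]
    (q : Γ → B) (hbd : ∃ C : ℝ, ∀ γ, ‖q γ‖ ≤ C)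
    (hconv : ∀ γ : Γ, Tendsto (fun ω => q ω * q γ) atTop (nhds (q γ)))
    (U : Ultrafilter Γ) (hU : (atTop : Filter Γ) ≤ (U : Filter Γ)) :
    ∃ p : B,
      (∀ x : E, Tendsto (fun γ => ι (q γ) x) (U : Filter Γ) (nhds (ι p x))) ∧
      IsIdempotentElem p :=
  wstar_limit_idempotent_general ι hmul_left hmul_right q hbd hconv U hU
end
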